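/- Let p be an odd prime and let S = {2pi + (i² mod p) : i = 0, 1, ..., p-1}, where (x mod p) ∈ [0, p-1]. Then S is a Sidon set contained in [0, 2p²) with p elements, and |s - s'| ≥ p for any two distinct s, s' ∈ S. -/

import Mathlib

/-!
Write the `i`-th element as `2p·i + rᵢ` with `rᵢ = i² mod p < p`. Since `rᵢ + rⱼ < 2p`, a
sum of two elements determines both `i + j` and `rᵢ + rⱼ`, hence `i + j` and `i² + j²`
modulo `p`. For `p` odd these determine `{i, j}` in `ZMod p`, because
`2ij = (i + j)² - (i² + j²)` and `i, j` are then the roots of `X² - (i + j)X + ij`.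
The leading term `2p·i` also gives the separation by `p`.
-/

theorem Nat.eq_and_eq_of_mul_add_eq_mul_add {m q q' r r' : ℕ} (hr : r < m) (hr' : r' < m)
    (h : m * q + r = m * q' + r') : q = q' ∧ r = r' := by
  have hm : 0 < m := by omega
  obtain ⟨hq, hr⟩ := (Nat.div_mod_unique hm).mpr ⟨(add_comm _ _).trans h, hr⟩
  obtain ⟨hq', hr'⟩ := (Nat.div_mod_unique hm).mpr ⟨add_comm _ _, hr'⟩
  exact ⟨hq.symm.trans hq', hr.symm.trans hr'⟩

theorem eq_and_eq_or_eq_and_eq_of_add_eq_add_of_sq_add_sq_eq {R : Type*} [CommRing R]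
    [NoZeroDivisors R] [NeZero (2 : R)] {x y z w : R} (hsum : x + y = z + w)
    (hsq : x ^ 2 + y ^ 2 = z ^ 2 + w ^ 2) : (x = z ∧ y = w) ∨ (x = w ∧ y = z) := by
  have hprod : x * y = z * w :=
    mul_left_cancel₀ (two_ne_zero (α := R)) (by linear_combination (x + y + z + w) * hsum - hsq)
  have hroots : (x - z) * (x - w) = 0 := by linear_combination x * hsum - hprod
  rcases mul_eq_zero.mp hroots with h | h
  · refine .inl ⟨sub_eq_zero.mp h, ?_⟩
    linear_combination hsum - h
  · refine .inr ⟨sub_eq_zero.mp h, ?_⟩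
    linear_combination hsum - h

theorem ZMod.natCast_inj_of_lt {n a b : ℕ} (ha : a < n) (hb : b < n)
    (h : (a : ZMod n) = b) : a = b := by
  rwa [ZMod.natCast_eq_natCast_iff', Nat.mod_eq_of_lt ha, Nat.mod_eq_of_lt hb] at h

instance ZMod.neZero_two_of_odd_prime {p : ℕ} [Fact p.Prime] [Fact (Odd p)] :
    NeZero (2 : ZMod p) :=
  ⟨Ring.two_ne_zero <| by
    rw [ZMod.ringChar_zmod_n]
    rintro rfl
    exact Nat.not_odd_iff_even.mpr even_two Fact.out⟩

def erdosTuran (p i : ℕ) : ℕ := 2 * p * i + i ^ 2 % p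

section erdosTuran

variable {p : ℕ}

theorem erdosTuran_add_le (hp : 0 < p) {i j : ℕ} (hij : i < j) :
    erdosTuran p i + p ≤ erdosTuran p j := by
  have hr : i ^ 2 % p < p := Nat.mod_lt _ hp
  have hmul : 2 * p * i + 2 * p ≤ 2 * p * j :=
    Nat.mul_add_one (2 * p) i ▸ Nat.mul_le_mul_left _ hij
  unfold erdosTuran
  omega

theorem erdosTuran_strictMono (hp : 0 < p) : StrictMono (erdosTuran p) :=
  fun _ _ hij => (Nat.lt_add_of_pos_right hp).trans_le (erdosTuran_add_le hp hij)

theorem erdosTuran_self : erdosTuran p p = 2 * p ^ 2 := by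
  simp only [erdosTuran, pow_two, Nat.mul_mod_left, add_zero, mul_assoc]

theorem erdosTuran_lt {i : ℕ} (hi : i < p) : erdosTuran p i < 2 * p ^ 2 :=
  erdosTuran_self ▸ erdosTuran_strictMono (by omega) hi

theorem le_abs_erdosTuran_sub (hp : 0 < p) {i j : ℕ} (hij : i ≠ j) :
    (p : ℤ) ≤ |(erdosTuran p i : ℤ) - erdosTuran p j| := by
  rcases hij.lt_or_gt with h | h
  · have := erdosTuran_add_le hp h
    rw [abs_sub_comm, abs_of_nonneg (by omega)]
    omega
  · have := erdosTuran_add_le hp h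
    rw [abs_of_nonneg (by omega)]
    omega

theorem erdosTuran_add_eq_add {a b c d : ℕ} (hp : 0 < p)
    (h : erdosTuran p a + erdosTuran p b = erdosTuran p c + erdosTuran p d) :
    a + b = c + d ∧ a ^ 2 % p + b ^ 2 % p = c ^ 2 % p + d ^ 2 % p := by
  have hr : ∀ i, i ^ 2 % p < p := fun i => Nat.mod_lt _ hp
  refine Nat.eq_and_eq_of_mul_add_eq_mul_add (m := 2 * p) ?_ ?_ ?_
  · linarith [hr a, hr b]
  · linarith [hr c, hr d]
  · unfold erdosTuran at h
    linarith

theorem erdosTuran_sidon [Fact p.Prime] [Fact (Odd p)] {a b c d : ℕ} (ha : a < p) (hc : c < p)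
    (hd : d < p)
    (h : erdosTuran p a + erdosTuran p b = erdosTuran p c + erdosTuran p d) :
    (a = c ∧ b = d) ∨ (a = d ∧ b = c) := by
  obtain ⟨hsum, hsq⟩ := erdosTuran_add_eq_add (Fact.out : p.Prime).pos h
  have hsumZ : (a : ZMod p) + b = c + d := by
    exact_mod_cast congrArg (Nat.cast : ℕ → ZMod p) hsum
  have hsqZ : (a : ZMod p) ^ 2 + b ^ 2 = c ^ 2 + d ^ 2 := by
    simpa only [Nat.cast_add, ZMod.natCast_mod, Nat.cast_pow] using
      congrArg (Nat.cast : ℕ → ZMod p) hsq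
  rcases eq_and_eq_or_eq_and_eq_of_add_eq_add_of_sq_add_sq_eq hsumZ hsqZ with
    ⟨hac, -⟩ | ⟨had, -⟩
  · have := ZMod.natCast_inj_of_lt ha hc hac
    omega
  · have := ZMod.natCast_inj_of_lt ha hd had
    omega

end erdosTuran

/-- The Erdős–Turán construction: for an odd prime `p`, the set
`S = {2pi + (i² mod p) : 0 ≤ i ≤ p-1}` is a Sidon set in `[0, 2p²)` with `p`
elements, and distinct elements of `S` differ by at least `p`. -/
theorem stmt5 (p : ℕ) (hp : p.Prime) (hodd : Odd p)
    (S : Finset ℕ) (hS : S = (Finset.range p).image fun i => 2 * p * i + i ^ 2 % p) :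
    (∀ s ∈ S, s < 2 * p ^ 2) ∧ S.card = p ∧
      (∀ s₁ ∈ S, ∀ s₂ ∈ S, ∀ s₃ ∈ S, ∀ s₄ ∈ S, s₁ + s₂ = s₃ + s₄ →
        (s₁ = s₃ ∧ s₂ = s₄) ∨ (s₁ = s₄ ∧ s₂ = s₃)) ∧
      ∀ s ∈ S, ∀ s' ∈ S, s ≠ s' → (p : ℤ) ≤ |(s : ℤ) - s'| := by
  have : Fact p.Prime := ⟨hp⟩
  have : Fact (Odd p) := ⟨hodd⟩
  change S = (Finset.range p).image (erdosTuran p) at hS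
  subst hS
  simp only [Finset.forall_mem_image, Finset.mem_range]
  refine ⟨fun i hi => erdosTuran_lt hi, ?_, ?_, ?_⟩
  · rw [Finset.card_image_of_injective _ (erdosTuran_strictMono hp.pos).injective,
      Finset.card_range]
  · intro a ha b _ c hc d hd h
    rcases erdosTuran_sidon ha hc hd h with ⟨rfl, rfl⟩ | ⟨rfl, rfl⟩
    exacts [.inl ⟨rfl, rfl⟩, .inr ⟨rfl, rfl⟩]
  · intro i _ j _ hne
    exact le_abs_erdosTuran_sub hp.pos fun hij => hne (congrArg _ hij)
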